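/- Let H = (V, E) be a hypergraph, k a positive integer, and e, e' ∈ E distinct edges. If γ_H(e) < k (e is k-weak) and e' is k-strong (γ_H(e') ≥ k), then the corresponding edge f of e in the contracted hypergraph H/e' satisfies γ_{H/e'}(f) = γ_H(e); that is, contracting a k-strong edge does not change the strength of a k-weak edge. -/

import Mathlib

/- A hypergraph on a finite vertex type `V` is given by a multiset `E` of edges,
each edge a `Finset V` (with at least 2 vertices, stated as a hypothesis). -/

variable {V : Type*} [Fintype V] [DecidableEq V]

/-- `δ_H(A)`: the (multiset of) edges of `E` crossing the cut `A`. -/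
def cutEdges (E : Multiset (Finset V)) (A : Finset V) : Multiset (Finset V) :=
  E.filter (fun e => (e ∩ A).Nonempty ∧ (e \ A).Nonempty)

/-- Edge multiset of the subhypergraph `H[U]` induced on `U`. -/
def induced (E : Multiset (Finset V)) (U : Finset V) : Multiset (Finset V) :=
  E.filter (fun e => e ⊆ U)

/-- Edge-connectivity `λ(H[U])`: the minimum number of edges of `H[U]` crossing a
nonempty proper subset `A ⊊ U`. -/
noncomputable def lam (E : Multiset (Finset V)) (U : Finset V) : ℕ :=
  sInf {k : ℕ | ∃ A : Finset V, A ⊆ U ∧ A.Nonempty ∧ A ≠ U ∧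
    k = Multiset.card (cutEdges (induced E U) A)}

/-- Strength `γ_H(e)`: the maximum of `λ(H[U])` over all `U` with `e ⊆ U ⊆ V`. -/
noncomputable def strength (E : Multiset (Finset V)) (e : Finset V) : ℕ :=
  (Finset.univ.powerset.filter (fun U => e ⊆ U)).sup (lam E)

/-- The graph on `V` joining two distinct vertices that lie in a common edge of `E`;
its connectivity notions are those of the hypergraph. -/
def toGraph (E : Multiset (Finset V)) : SimpleGraph V where
  Adj u v := u ≠ v ∧ ∃ e ∈ E, u ∈ e ∧ v ∈ e
  symm := ⟨by rintro u v ⟨h, e, he, hu, hv⟩; exact ⟨h.symm, e, he, hv, hu⟩⟩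
  loopless := ⟨by rintro v ⟨h, -⟩; exact h rfl⟩

/-- `κ(H)`: the number of connected components of the hypergraph. -/
noncomputable def kappa (E : Multiset (Finset V)) : ℕ :=
  Nat.card (toGraph E).ConnectedComponent

/-- The vertex map contracting the edge `e'` to its representative vertex `v0 ∈ e'`. -/
def contractMap (e' : Finset V) (v0 : V) : V → V := fun u => if u ∈ e' then v0 else u

/-- The hypergraph `H/e'` obtained by contracting the edge `e'` (to the representative
vertex `v0 ∈ e'`): edges contained in `e'` are removed, all other edges are replaced by
their image under the contraction. -/
def contract (E : Multiset (Finset V)) (e' : Finset V) (v0 : V) : Multiset (Finset V) :=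
  (E.filter (fun f => ¬ f ⊆ e')).map (fun f => f.image (contractMap e' v0))

/-- The degree of a vertex: the number of edges (with multiplicity) containing it. -/
def degree (E : Multiset (Finset V)) (v : V) : ℕ :=
  Multiset.card (E.filter (fun e => v ∈ e))

/-!
Pulling cuts back along the contraction map identifies the cuts of `H/e'` with the cuts of `H`
that do not split `e'`. So on a vertex set that does not split `e'`, contraction can only raise
`λ`, and a cut of `H` that misses `e'` survives in `H/e'` with the same weight.

Fix `W ⊇ e'` with `λ(H[W]) = γ(e') ≥ k`; a cut of weight `< k` never splits `W`. For `U'`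
containing `f` with preimage `U ⊇ e'`, a minimum cut of `H[U ∪ W]` weighs at most `γ(e) < k`,
so it or its complement misses `W ⊇ e'` and survives in `H/e'`: hence `γ_{H/e'}(f) ≤ γ(e)`.
Conversely, if `U` realises `γ(e)` and meets `e'`, then `λ(U ∪ W) ≥ min(λ(U), λ(W)) = λ(U)`
and `U ∪ W` contains `e'`, so its image in `H/e'` has connectivity at least `γ(e)`.
-/

open Finset

section Cuts

variable {α : Type*} [DecidableEq α] {A U W g : Finset α}

def Crosses (g A : Finset α) : Prop := (g ∩ A).Nonempty ∧ (g \ A).Nonempty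

instance (g A : Finset α) : Decidable (Crosses g A) := inferInstanceAs (Decidable (_ ∧ _))

lemma crosses_iff_of_subset (hA : A ⊆ U) : Crosses U A ↔ A.Nonempty ∧ A ≠ U := by
  rw [Crosses, inter_eq_right.mpr hA, sdiff_nonempty]
  exact and_congr_right fun _ =>
    ⟨fun h hAU => h (hAU ▸ subset_rfl), fun h hUA => h (hA.antisymm hUA)⟩

lemma crosses_sdiff_iff (hg : g ⊆ U) : Crosses g (U \ A) ↔ Crosses g A := by
  have h₁ : g ∩ (U \ A) = g \ A := by ext x; simp only [mem_inter, mem_sdiff]; grind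
  have h₂ : g \ (U \ A) = g ∩ A := by ext x; simp only [mem_inter, mem_sdiff]; grind
  rw [Crosses, Crosses, h₁, h₂, and_comm]

lemma Crosses.mono (h : Crosses g A) (hgU : g ⊆ U) : Crosses U A :=
  ⟨h.1.mono (inter_subset_inter_right hgU), h.2.mono (sdiff_subset_sdiff hgU subset_rfl)⟩

lemma not_crosses_of_disjoint (h : Disjoint g A) : ¬ Crosses g A :=
  fun hc => hc.1.ne_empty (disjoint_iff_inter_eq_empty.mp h)

lemma not_crosses_inter (hA : ¬ Crosses g A) (hU : ¬ Crosses g U) : ¬ Crosses g (A ∩ U) := by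
  rintro ⟨⟨w, hw⟩, ⟨x, hx⟩⟩
  simp only [mem_inter, mem_sdiff] at hw hx
  have hxA : x ∈ A := by_contra fun h =>
    hA ⟨⟨w, mem_inter.mpr ⟨hw.1, hw.2.1⟩⟩, ⟨x, mem_sdiff.mpr ⟨hx.1, h⟩⟩⟩
  have hxU : x ∈ U := by_contra fun h =>
    hU ⟨⟨w, mem_inter.mpr ⟨hw.1, hw.2.2⟩⟩, ⟨x, mem_sdiff.mpr ⟨hx.1, h⟩⟩⟩
  exact hx.2 ⟨hxA, hxU⟩

lemma crosses_inter_iff_of_subset (hg : g ⊆ W) : Crosses g (A ∩ W) ↔ Crosses g A := by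
  have h₁ : g ∩ (A ∩ W) = g ∩ A := by ext x; simp only [mem_inter]; grind
  have h₂ : g \ (A ∩ W) = g \ A := by ext x; simp only [mem_inter, mem_sdiff]; grind
  rw [Crosses, Crosses, h₁, h₂]

lemma crosses_or_crosses_of_union (hUW : (U ∩ W).Nonempty) (h : Crosses (U ∪ W) A) :
    Crosses U A ∨ Crosses W A := by
  obtain ⟨x, hx⟩ := hUW
  simp only [Crosses, Finset.Nonempty, mem_inter, mem_sdiff, mem_union] at *
  grind

variable {E : Multiset (Finset α)}

lemma cutEdges_induced_eq (E : Multiset (Finset α)) (U A : Finset α) :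
    cutEdges (induced E U) A = E.filter (fun g => Crosses g A ∧ g ⊆ U) := by
  rw [cutEdges, induced, Multiset.filter_filter]
  rfl

lemma card_cutEdges_sdiff :
    Multiset.card (cutEdges (induced E U) (U \ A)) =
      Multiset.card (cutEdges (induced E U) A) := by
  rw [cutEdges_induced_eq, cutEdges_induced_eq]
  congr 1
  exact Multiset.filter_congr fun g _ => and_congr_left crosses_sdiff_iff

lemma card_cutEdges_inter_le (hWU : W ⊆ U) :
    Multiset.card (cutEdges (induced E W) (A ∩ W)) ≤
      Multiset.card (cutEdges (induced E U) A) := by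
  rw [cutEdges_induced_eq, cutEdges_induced_eq]
  exact Multiset.card_le_card (Multiset.monotone_filter_right E
    fun _ ⟨hg, hgW⟩ => ⟨(crosses_inter_iff_of_subset hgW).mp hg, hgW.trans hWU⟩)

lemma lam_le_card_cutEdges (hWU : W ⊆ U) (h : Crosses W A) :
    lam E W ≤ Multiset.card (cutEdges (induced E U) A) := by
  have hcut : Crosses W (A ∩ W) := (crosses_inter_iff_of_subset subset_rfl).mpr h
  obtain ⟨hne, hproper⟩ := (crosses_iff_of_subset inter_subset_right).mp hcut
  refine (Nat.sInf_le ?_).trans (card_cutEdges_inter_le hWU)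
  exact ⟨A ∩ W, inter_subset_right, hne, hproper, rfl⟩

lemma exists_card_cutEdges_eq_lam (hU : 1 < U.card) :
    ∃ A ⊆ U, Crosses U A ∧ Multiset.card (cutEdges (induced E U) A) = lam E U := by
  obtain ⟨a, ha, b, hb, hab⟩ := one_lt_card.mp hU
  have hne : {k : ℕ | ∃ A : Finset α, A ⊆ U ∧ A.Nonempty ∧ A ≠ U ∧
      k = Multiset.card (cutEdges (induced E U) A)}.Nonempty :=
    ⟨_, {a}, singleton_subset_iff.mpr ha, singleton_nonempty a,
      fun h => hab (mem_singleton.mp (h ▸ hb)).symm, rfl⟩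
  obtain ⟨A, hAU, hA, hAU', hcard⟩ := Nat.sInf_mem hne
  exact ⟨A, hAU, (crosses_iff_of_subset hAU).mpr ⟨hA, hAU'⟩, hcard.symm⟩

lemma le_lam {c : ℕ} (hU : 1 < U.card)
    (h : ∀ A ⊆ U, Crosses U A → c ≤ Multiset.card (cutEdges (induced E U) A)) :
    c ≤ lam E U := by
  obtain ⟨A, hAU, hA, hcard⟩ := exists_card_cutEdges_eq_lam (E := E) hU
  exact hcard ▸ h A hAU hA

lemma min_lam_le_lam_union (hU : 1 < U.card) (hUW : (U ∩ W).Nonempty) :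
    min (lam E U) (lam E W) ≤ lam E (U ∪ W) := by
  refine le_lam (hU.trans_le (card_le_card subset_union_left)) fun A _ hA => ?_
  rcases crosses_or_crosses_of_union hUW hA with h | h
  · exact min_le_of_left_le (lam_le_card_cutEdges subset_union_left h)
  · exact min_le_of_right_le (lam_le_card_cutEdges subset_union_right h)

lemma exists_cut_disjoint_of_lam_lt (hWU : W ⊆ U) (hU : 1 < U.card) (hlt : lam E U < lam E W) :
    ∃ A ⊆ U, Crosses U A ∧ Disjoint A W ∧
      Multiset.card (cutEdges (induced E U) A) = lam E U := by
  obtain ⟨A, hAU, hA, hcard⟩ := exists_card_cutEdges_eq_lam (E := E) hU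
  -- a cut lighter than `λ(W)` cannot split `W`, so `A` or its complement misses `W`
  have hWA : ¬ Crosses W A := fun h => (lam_le_card_cutEdges hWU h).not_gt (hcard ▸ hlt)
  by_cases hdisj : (W ∩ A).Nonempty
  · have hWA : W ⊆ A := sdiff_eq_empty_iff_subset.mp
      (not_nonempty_iff_eq_empty.mp fun h => hWA ⟨hdisj, h⟩)
    refine ⟨U \ A, sdiff_subset, (crosses_sdiff_iff subset_rfl).mpr hA, ?_, ?_⟩
    · exact disjoint_sdiff_self_left.mono_right hWA
    · rw [card_cutEdges_sdiff, hcard]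
  · exact ⟨A, hAU, hA, disjoint_iff_inter_eq_empty.mpr
      (inter_comm A W ▸ not_nonempty_iff_eq_empty.mp hdisj), hcard⟩

end Cuts

section ContractMap

variable {α : Type*} [DecidableEq α] {e e' : Finset α} {v0 x y : α}

lemma contractMap_of_mem (hx : x ∈ e') : contractMap e' v0 x = v0 := if_pos hx

lemma contractMap_of_notMem (hx : x ∉ e') : contractMap e' v0 x = x := if_neg hx

lemma contractMap_eq_contractMap_iff (hv0 : v0 ∈ e') :
    contractMap e' v0 x = contractMap e' v0 y ↔ x = y ∨ x ∈ e' ∧ y ∈ e' := by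
  by_cases hx : x ∈ e' <;> by_cases hy : y ∈ e' <;>
    simp only [contractMap, hx, hy, if_true, if_false] <;> grind

lemma one_lt_card_image_contractMap (hv0 : v0 ∈ e') (he : 1 < e.card) (hee' : ¬ e ⊆ e') :
    1 < (e.image (contractMap e' v0)).card := by
  obtain ⟨a, hae, hae'⟩ := not_subset.mp hee'
  obtain ⟨b, hbe, hba⟩ := exists_mem_ne he a
  refine one_lt_card.mpr ⟨a, mem_image.mpr ⟨a, hae, contractMap_of_notMem hae'⟩, _,
    mem_image_of_mem _ hbe, fun hab => hba ?_⟩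
  rcases (contractMap_eq_contractMap_iff hv0).mp (contractMap_of_notMem hae' ▸ hab) with h | h
  · exact h.symm
  · exact absurd h.1 hae'

end ContractMap

section Strength

variable {E : Multiset (Finset V)} {U W e : Finset V}

lemma lam_le_strength (h : e ⊆ U) : lam E U ≤ strength E e :=
  le_sup (mem_filter.mpr ⟨mem_powerset.mpr (subset_univ U), h⟩)

lemma exists_lam_eq_strength (E : Multiset (Finset V)) (e : Finset V) :
    ∃ U, e ⊆ U ∧ lam E U = strength E e := by
  obtain ⟨U, hU, h⟩ := exists_mem_eq_sup ({U ∈ univ.powerset | e ⊆ U})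
    ⟨univ, by simp⟩ (lam E)
  exact ⟨U, (mem_filter.mp hU).2, h.symm⟩

lemma strength_anti (h : e ⊆ W) : strength E W ≤ strength E e :=
  Finset.sup_le fun _ hU => lam_le_strength (h.trans (mem_filter.mp hU).2)

end Strength

section Contraction

variable {E : Multiset (Finset V)} {e' A S U U' : Finset V} {v0 x : V}

def contractPreimage (e' : Finset V) (v0 : V) (S : Finset V) : Finset V :=
  {x | contractMap e' v0 x ∈ S}

@[simp]
lemma mem_contractPreimage : x ∈ contractPreimage e' v0 S ↔ contractMap e' v0 x ∈ S := by
  simp [contractPreimage]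

lemma image_contractMap_subset_iff :
    S.image (contractMap e' v0) ⊆ U ↔ S ⊆ contractPreimage e' v0 U := by
  simp [subset_iff]

lemma crosses_image_contractMap_iff :
    Crosses (S.image (contractMap e' v0)) A ↔ Crosses S (contractPreimage e' v0 A) := by
  simp [Crosses, Finset.Nonempty]

lemma not_crosses_contractPreimage : ¬ Crosses e' (contractPreimage e' v0 A) := by
  rintro ⟨⟨x, hx⟩, ⟨y, hy⟩⟩
  simp only [mem_inter, mem_sdiff, mem_contractPreimage] at hx hy
  rw [contractMap_of_mem hx.1] at hx
  rw [contractMap_of_mem hy.1] at hy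
  exact hy.2 hx.2

lemma card_cutEdges_contract (U A : Finset V) :
    Multiset.card (cutEdges (induced (contract E e' v0) U) A) =
      Multiset.card
        (cutEdges (induced E (contractPreimage e' v0 U)) (contractPreimage e' v0 A)) := by
  rw [cutEdges_induced_eq, cutEdges_induced_eq, contract, Multiset.filter_map, Multiset.card_map,
    Multiset.filter_filter]
  congr 1
  refine Multiset.filter_congr fun g _ => ?_
  simp only [Function.comp_apply, crosses_image_contractMap_iff, image_contractMap_subset_iff]
  exact ⟨And.left, fun h => ⟨h, fun hg => not_crosses_contractPreimage (h.1.mono hg)⟩⟩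

lemma contractPreimage_image (hv0 : v0 ∈ e') (hS : ¬ Crosses e' S) :
    contractPreimage e' v0 (S.image (contractMap e' v0)) = S := by
  ext x
  simp only [mem_contractPreimage, mem_image, contractMap_eq_contractMap_iff hv0]
  refine ⟨?_, fun hx => ⟨x, hx, .inl rfl⟩⟩
  rintro ⟨y, hyS, rfl | ⟨hy, hx⟩⟩
  · exact hyS
  · by_contra hxS
    exact hS ⟨⟨y, mem_inter.mpr ⟨hy, hyS⟩⟩, ⟨x, mem_sdiff.mpr ⟨hx, hxS⟩⟩⟩

lemma lam_le_lam_contract (hv0 : v0 ∈ e') (hS : ¬ Crosses e' S)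
    (hcard : 1 < (S.image (contractMap e' v0)).card) :
    lam E S ≤ lam (contract E e' v0) (S.image (contractMap e' v0)) :=
  le_lam hcard fun _ _ hA => by
    rw [card_cutEdges_contract, contractPreimage_image hv0 hS]
    exact lam_le_card_cutEdges subset_rfl (crosses_image_contractMap_iff.mp hA)

lemma lam_contract_le_card_cutEdges (hv0 : v0 ∈ e') (hU : contractPreimage e' v0 U' ⊆ U)
    (hA : Crosses (contractPreimage e' v0 U') A) (he'A : ¬ Crosses e' A) :
    lam (contract E e' v0) U' ≤ Multiset.card (cutEdges (induced E U) A) := by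
  set S := contractPreimage e' v0 U'
  have hpre : contractPreimage e' v0 ((A ∩ S).image (contractMap e' v0)) = A ∩ S :=
    contractPreimage_image hv0 (not_crosses_inter he'A not_crosses_contractPreimage)
  have hcross : Crosses U' ((A ∩ S).image (contractMap e' v0)) := by
    have hSU' : S.image (contractMap e' v0) ⊆ U' := image_contractMap_subset_iff.mpr subset_rfl
    refine Crosses.mono ?_ hSU'
    rw [crosses_image_contractMap_iff, hpre]
    exact (crosses_inter_iff_of_subset subset_rfl).mpr hA
  calc lam (contract E e' v0) U'
      ≤ Multiset.card (cutEdges (induced (contract E e' v0) U')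
          ((A ∩ S).image (contractMap e' v0))) := lam_le_card_cutEdges subset_rfl hcross
    _ = Multiset.card (cutEdges (induced E S) (A ∩ S)) := by rw [card_cutEdges_contract, hpre]
    _ ≤ Multiset.card (cutEdges (induced E U) A) := card_cutEdges_inter_le hU

end Contraction

section StrengthContraction

variable {E : Multiset (Finset V)} {e e' W : Finset V} {v0 : V}

lemma strength_contract_le (hv0 : v0 ∈ e') (he : 1 < e.card) (he'W : e' ⊆ W)
    (hlt : strength E e < lam E W) :
    strength (contract E e' v0) (e.image (contractMap e' v0)) ≤ strength E e := by
  refine Finset.sup_le fun U' hU' => ?_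
  set S := contractPreimage e' v0 U'
  have heS : e ⊆ S := image_contractMap_subset_iff.mp (mem_filter.mp hU').2
  by_cases he'S : e' ⊆ S
  · have heSW : e ⊆ S ∪ W := heS.trans subset_union_left
    have hlam : lam E (S ∪ W) ≤ strength E e := lam_le_strength heSW
    obtain ⟨A, -, hA, hAW, hcard⟩ := exists_cut_disjoint_of_lam_lt subset_union_right
      (he.trans_le (card_le_card heSW)) (hlam.trans_lt hlt)
    have hSW : (S ∩ W).Nonempty := ⟨v0, mem_inter.mpr ⟨he'S hv0, he'W hv0⟩⟩
    have hAS : Crosses S A :=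
      (crosses_or_crosses_of_union hSW hA).resolve_right (not_crosses_of_disjoint hAW.symm)
    calc lam (contract E e' v0) U'
        ≤ Multiset.card (cutEdges (induced E (S ∪ W)) A) := lam_contract_le_card_cutEdges hv0
          subset_union_left hAS (not_crosses_of_disjoint (hAW.mono_right he'W).symm)
      _ ≤ strength E e := hcard ▸ hlam
  · obtain ⟨A, hAS, hA, hcard⟩ :=
      exists_card_cutEdges_eq_lam (E := E) (he.trans_le (card_le_card heS))
    have he'A : ¬ Crosses e' A := fun h => not_crosses_contractPreimage
      ⟨h.1.mono (inter_subset_inter_left hAS), sdiff_nonempty.mpr he'S⟩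
    calc lam (contract E e' v0) U'
        ≤ Multiset.card (cutEdges (induced E S) A) :=
          lam_contract_le_card_cutEdges hv0 subset_rfl hA he'A
      _ ≤ strength E e := hcard ▸ lam_le_strength heS

lemma le_strength_contract (hv0 : v0 ∈ e') (he : 1 < (e.image (contractMap e' v0)).card)
    (he'W : e' ⊆ W) (hlt : strength E e < lam E W) :
    strength E e ≤ strength (contract E e' v0) (e.image (contractMap e' v0)) := by
  obtain ⟨U, heU, hU⟩ := exists_lam_eq_strength E e
  obtain ⟨T, heT, hT, hUT⟩ : ∃ T, e ⊆ T ∧ ¬ Crosses e' T ∧ lam E U ≤ lam E T := by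
    by_cases hUe' : (U ∩ e').Nonempty
    · refine ⟨U ∪ W, heU.trans subset_union_left,
        fun h => h.2.ne_empty (sdiff_eq_empty_iff_subset.mpr (he'W.trans subset_union_right)), ?_⟩
      calc lam E U = min (lam E U) (lam E W) := (min_eq_left (hU ▸ hlt.le)).symm
        _ ≤ lam E (U ∪ W) := min_lam_le_lam_union
          ((he.trans_le card_image_le).trans_le (card_le_card heU))
          (hUe'.mono (inter_subset_inter_left he'W))
    · exact ⟨U, heU, fun h => hUe' (inter_comm e' U ▸ h.1), le_rfl⟩
  have heT' : e.image (contractMap e' v0) ⊆ T.image (contractMap e' v0) := image_subset_image heT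
  calc strength E e = lam E U := hU.symm
    _ ≤ lam E T := hUT
    _ ≤ lam (contract E e' v0) (T.image (contractMap e' v0)) :=
      lam_le_lam_contract hv0 hT (he.trans_le (card_le_card heT'))
    _ ≤ strength (contract E e' v0) (e.image (contractMap e' v0)) := lam_le_strength heT'

end StrengthContraction

theorem strength_contract_strong_eq_general (E : Multiset (Finset V))
    (hE : ∀ e ∈ E, 2 ≤ e.card) (k : ℕ)
    (e e' : Finset V) (he : e ∈ E)
    (v0 : V) (hv0 : v0 ∈ e')
    (hweak : strength E e < k) (hstrong : k ≤ strength E e') :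
    strength (contract E e' v0) (e.image (contractMap e' v0)) = strength E e := by
  obtain ⟨W, he'W, hW⟩ := exists_lam_eq_strength E e'
  have hlt : strength E e < lam E W := hW ▸ hweak.trans_le hstrong
  have hee' : ¬ e ⊆ e' := fun h => (strength_anti h).not_gt (hweak.trans_le hstrong)
  exact le_antisymm (strength_contract_le hv0 (hE e he) he'W hlt)
    (le_strength_contract hv0 (one_lt_card_image_contractMap hv0 (hE e he) hee') he'W hlt)

/-- contracting a `k`-strong edge `e'` does not change the strength of a
`k`-weak edge `e`; here `f = e.image (contractMap e' v0)` is the edge of `H/e'`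
corresponding to `e`. -/
theorem strength_contract_strong_eq (E : Multiset (Finset V))
    (hE : ∀ e ∈ E, 2 ≤ e.card) (k : ℕ) (hk : 0 < k)
    (e e' : Finset V) (he : e ∈ E) (he' : e' ∈ E) (hne : e ≠ e')
    (v0 : V) (hv0 : v0 ∈ e')
    (hweak : strength E e < k) (hstrong : k ≤ strength E e') :
    strength (contract E e' v0) (e.image (contractMap e' v0)) = strength E e :=
  strength_contract_strong_eq_general E hE k e e' he v0 hv0 hweak hstrong
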